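/- Let a > −1 and b > 0. For all t > 0, x > 0, and λ ≥ 0, with p(t,x,y) = (y I_a(by)/(t I_a(bx))) exp( −(x²+y²)/(2t) − b²t/2 ) I_a(xy/t), one has ∫_0^∞ e^{−λ y²} p(t,x,y) dy = ( I_a( bx/(1+2λt) ) / ( (1+2λt) I_a(bx) ) ) · exp( −λ(x² + b²t²)/(1+2λt) ). -/

import Mathlib

/-!
Expanding both Bessel functions in their power series turns Weber's integral
`∫₀^∞ y e^(-c y²) I_a(αy) I_a(βy) dy` into a double series of Gaussian moments
`∫₀^∞ y^(2s+1) e^(-c y²) dy = Γ(s+1) / (2 c^(s+1))`, whose `(k, m)` coefficient involves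
`Γ(k+m+a+1) / (k! Γ(k+a+1) m! Γ(m+a+1))`. By the Chu–Vandermonde identity this ratio equals
`∑ᵢ 1 / (i! (k-i)! (m-i)! Γ(i+a+1))`; regrouping the terms by `(i, k-i, m-i)` factors the series
into `e^X e^Y ∑ᵢ (XY)^i / (i! Γ(i+a+1))` with `X = α²/(4c)`, `Y = β²/(4c)`, which gives
`e^((α²+β²)/(4c)) I_a(αβ/(2c)) / (2c)`. With `c = λ + 1/(2t)`, `α = b`, `β = x/t` this is the
Laplace transform of the transition density.
-/

open Real MeasureTheory Polynomial Finset Filter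
open scoped Nat

noncomputable def besselI (ν z : ℝ) : ℝ :=
  ∑' k : ℕ, (z / 2) ^ (2 * (k : ℝ) + ν) / ((Nat.factorial k : ℝ) * Real.Gamma ((k : ℝ) + ν + 1))

theorem Gamma_natCast_add_add_one_pos {a : ℝ} (ha : -1 < a) (n : ℕ) : 0 < Gamma (n + a + 1) :=
  Gamma_pos_of_pos (by linarith [(n.cast_nonneg : (0 : ℝ) ≤ n)])

theorem Real.Gamma_add_nat_eq_ascPochhammer_eval_mul {s : ℝ} (hs : 0 < s) (n : ℕ) :
    Gamma (s + n) = (ascPochhammer ℝ n).eval s * Gamma s := by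
  induction n with
  | zero => simp
  | succ n ih =>
    rw [Nat.cast_succ, ← add_assoc, Gamma_add_one (by positivity), ih, ascPochhammer_succ_eval]
    ring

theorem descPochhammer_smeval_mul_Gamma {x : ℝ} {n : ℕ} (h : (n : ℝ) < x + 1) :
    (descPochhammer ℤ n).smeval x * Gamma (x - n + 1) = Gamma (x + 1) := by
  rw [descPochhammer_smeval_eq_ascPochhammer, ascPochhammer_smeval_eq_eval,
    ← Real.Gamma_add_nat_eq_ascPochhammer_eval_mul (by linarith)]
  ring_nf

theorem Gamma_add_add_div_Gamma_eq_sum {a : ℝ} (ha : -1 < a) (k m : ℕ) :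
    Gamma (k + m + a + 1) / Gamma (m + a + 1) = ∑ i ∈ range (k + 1),
      k.choose i * m.descFactorial i * (Gamma (k + a + 1) / Gamma (i + a + 1)) := by
  have hΓ := Gamma_natCast_add_add_one_pos ha
  have hV := descPochhammer_smeval_mul_Gamma (x := m + (a + k)) (n := k)
    (by linarith [(m.cast_nonneg : (0 : ℝ) ≤ m)])
  -- Chu–Vandermonde for falling factorials: `(m + (a + k))^{(k)} = ∑ C(k,i) m^{(i)} (a + k)^{(k-i)}`
  rw [Ring.descPochhammer_smeval_add _ (Commute.all _ _), Nat.sum_antidiagonal_eq_sum_range_succ_mk,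
    show (m : ℝ) + (a + k) - k + 1 = m + a + 1 by ring,
    show (m : ℝ) + (a + k) + 1 = k + m + a + 1 by ring] at hV
  rw [← hV, mul_div_cancel_right₀ _ (hΓ m).ne']
  refine sum_congr rfl fun i hi => ?_
  have hik : i ≤ k := Nat.lt_succ_iff.mp (mem_range.mp hi)
  have hD := descPochhammer_smeval_mul_Gamma (x := a + k) (n := k - i)
    (by push_cast [hik]; linarith [(i.cast_nonneg : (0 : ℝ) ≤ i)])
  push_cast [hik] at hD
  rw [show a + k - (k - i) + 1 = (i : ℝ) + a + 1 by ring,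
    show a + (k : ℝ) + 1 = k + a + 1 by ring] at hD
  rw [descPochhammer_smeval_eq_descFactorial, ← hD, mul_div_cancel_right₀ _ (hΓ i).ne', mul_assoc]

theorem Gamma_add_add_div_eq_sum {a : ℝ} (ha : -1 < a) (k m : ℕ) :
    Gamma (k + m + a + 1) / (k ! * Gamma (k + a + 1) * (m ! * Gamma (m + a + 1))) =
      ∑ i ∈ range (min k m + 1), (i ! * (k - i)! * (m - i)! * Gamma (i + a + 1))⁻¹ := by
  have hΓ := Gamma_natCast_add_add_one_pos ha
  rw [show k ! * Gamma (k + a + 1) * (m ! * Gamma (m + a + 1)) =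
      Gamma (m + a + 1) * (k ! * m ! * Gamma (k + a + 1)) by ring, ← div_div,
    Gamma_add_add_div_Gamma_eq_sum ha, sum_div, ← sum_range_add_sum_Ico _ (by omega :
      min k m + 1 ≤ k + 1), sum_eq_zero (s := Ico _ _) fun i hi => ?_, add_zero]
  · refine sum_congr rfl fun i hi => ?_
    simp only [mem_range] at hi
    have hik : i ≤ k := by omega
    have him : i ≤ m := by omega
    have hC : (k.choose i : ℝ) * i ! * (k - i)! = k ! := by
      exact_mod_cast Nat.choose_mul_factorial_mul_factorial hik
    have hF : ((m - i)! : ℝ) * m.descFactorial i = m ! := by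
      exact_mod_cast Nat.factorial_mul_descFactorial him
    have := hΓ i
    have := hΓ k
    have : (k.choose i : ℝ) ≠ 0 := by exact_mod_cast (Nat.choose_pos hik).ne'
    have : (m.descFactorial i : ℝ) ≠ 0 := by exact_mod_cast (Nat.descFactorial_pos.mpr him).ne'
    rw [← hC, ← hF]
    field_simp
  · simp only [mem_Ico] at hi
    rw [Nat.descFactorial_eq_zero_iff_lt.mpr (by omega)]
    simp

theorem summable_pow_div_factorial_mul_Gamma {ν : ℝ} (hν : -1 < ν) (w : ℝ) :
    Summable fun k : ℕ => w ^ k / (k ! * Gamma (k + ν + 1)) := by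
  rcases eq_or_ne w 0 with rfl | hw
  · refine summable_of_ne_finset_zero (s := {0}) fun k hk => ?_
    simp [Finset.notMem_singleton.mp hk]
  have hΓ := Gamma_natCast_add_add_one_pos hν
  refine summable_of_ratio_test_tendsto_lt_one zero_lt_one
    (Eventually.of_forall fun k => by have := hΓ k; positivity) ?_
  have hratio : ∀ k : ℕ, ‖w ^ (k + 1) / ((k + 1 : ℕ)! * Gamma ((k + 1 : ℕ) + ν + 1))‖ /
      ‖w ^ k / (k ! * Gamma (k + ν + 1))‖ = |w| / ((k + 1) * (k + ν + 1)) := by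
    intro k
    have hk : (0 : ℝ) < k + ν + 1 := by linarith [(k.cast_nonneg : (0 : ℝ) ≤ k)]
    have h1 : Gamma ((k + 1 : ℕ) + ν + 1) = (k + ν + 1) * Gamma (k + ν + 1) := by
      rw [← Gamma_add_one hk.ne']; push_cast; ring_nf
    rw [h1, Nat.factorial_succ]
    push_cast
    simp only [norm_div, norm_mul, norm_pow, Real.norm_eq_abs, Nat.abs_cast, abs_of_pos hk,
      abs_of_pos (hΓ k), abs_of_pos (by positivity : (0 : ℝ) < k + 1)]
    have : |w| ≠ 0 := abs_ne_zero.mpr hw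
    field_simp
    ring
  simp_rw [hratio]
  have hn := tendsto_natCast_atTop_atTop (R := ℝ)
  exact tendsto_const_nhds.div_atTop <| (tendsto_atTop_add_const_right _ _ hn).atTop_mul_atTop₀
    (tendsto_atTop_add_const_right _ _ (tendsto_atTop_add_const_right _ _ hn))

theorem HasSum.ite_tsub_tsub {M : Type*} [AddCommMonoid M] [TopologicalSpace M]
    {g : ℕ × ℕ × ℕ → M} {s : M} (hg : HasSum g s) :
    HasSum (fun p : (ℕ × ℕ) × ℕ =>
      if p.2 ≤ p.1.1 ∧ p.2 ≤ p.1.2 then g (p.2, p.1.1 - p.2, p.1.2 - p.2) else 0) s := by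
  refine (Function.Injective.hasSum_iff
    (g := fun p : ℕ × ℕ × ℕ => ((p.1 + p.2.1, p.1 + p.2.2), p.1)) ?_ ?_).mp ?_
  · rintro ⟨i, j, n⟩ ⟨i', j', n'⟩ h
    simp only [Prod.mk.injEq] at h ⊢
    omega
  · rintro ⟨⟨k, m⟩, i⟩ hp
    refine if_neg fun hi => hp ⟨(i, k - i, m - i), ?_⟩
    dsimp only at hi
    show ((i + (k - i), i + (m - i)), i) = ((k, m), i)
    rw [Nat.add_sub_cancel' hi.1, Nat.add_sub_cancel' hi.2]
  · refine hg.congr_fun fun p => ?_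
    simp

theorem hasSum_pow_mul_pow_mul_Gamma_div {a X Y : ℝ} (ha : -1 < a) (hX : 0 ≤ X) (hY : 0 ≤ Y) :
    HasSum (fun q : ℕ × ℕ => X ^ q.1 * Y ^ q.2 * (Gamma (q.1 + q.2 + a + 1) /
        (q.1 ! * Gamma (q.1 + a + 1) * (q.2 ! * Gamma (q.2 + a + 1)))))
      ((∑' i : ℕ, (X * Y) ^ i / (i ! * Gamma (i + a + 1))) * (exp X * exp Y)) := by
  have hΓ := Gamma_natCast_add_add_one_pos ha
  have hA := (summable_pow_div_factorial_mul_Gamma ha (X * Y)).hasSum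
  have hB : HasSum (fun j : ℕ => X ^ j / (j ! : ℝ)) (exp X) := by
    rw [exp_eq_exp_ℝ]; exact NormedSpace.expSeries_div_hasSum_exp X
  have hD : HasSum (fun n : ℕ => Y ^ n / (n ! : ℝ)) (exp Y) := by
    rw [exp_eq_exp_ℝ]; exact NormedSpace.expSeries_div_hasSum_exp Y
  have hBD := hB.mul hD (hB.summable.mul_of_nonneg hD.summable (fun j => by positivity)
    fun n => by positivity)
  have hABD := hA.mul hBD (hA.summable.mul_of_nonneg hBD.summable
    (fun i => by have := hΓ i; positivity) fun p => by positivity)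
  -- regroup the terms `(i, j, n)` of the triple series according to `(k, m) = (i + j, i + n)`
  refine (hABD.ite_tsub_tsub.prod_fiberwise fun q => hasSum_sum_of_ne_finset_zero
    (s := range (min q.1 q.2 + 1)) fun i hi => if_neg ?_).congr_fun fun ⟨k, m⟩ => ?_
  · simp only [mem_range] at hi
    dsimp only
    omega
  rw [Gamma_add_add_div_eq_sum ha, mul_sum]
  refine sum_congr rfl fun i hi => ?_
  simp only [mem_range] at hi
  have hik : i ≤ k := by omega
  have him : i ≤ m := by omega
  have := hΓ i
  rw [if_pos (And.intro hik him), ← pow_mul_pow_sub X hik, ← pow_mul_pow_sub Y him]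
  field_simp
  ring

noncomputable def besselITerm (ν z : ℝ) (k : ℕ) : ℝ :=
  (z / 2) ^ (2 * (k : ℝ) + ν) / ((Nat.factorial k : ℝ) * Real.Gamma ((k : ℝ) + ν + 1))

theorem besselI_eq_tsum (ν z : ℝ) : besselI ν z = ∑' k, besselITerm ν z k := rfl

theorem Real.rpow_two_mul_natCast_add {x : ℝ} (hx : 0 < x) (k : ℕ) (ν : ℝ) :
    x ^ (2 * (k : ℝ) + ν) = x ^ ν * (x ^ 2) ^ k := by
  rw [add_comm, rpow_add hx, ← pow_mul, ← rpow_natCast]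
  push_cast
  ring_nf

theorem besselITerm_eq {ν z : ℝ} (hz : 0 < z) (k : ℕ) :
    besselITerm ν z k = (z / 2) ^ ν * (((z / 2) ^ 2) ^ k / (k ! * Gamma (k + ν + 1))) := by
  rw [besselITerm, rpow_two_mul_natCast_add (by positivity), mul_div_assoc]

theorem besselITerm_mul {ν z y : ℝ} (hz : 0 ≤ z) (hy : 0 ≤ y) (k : ℕ) :
    besselITerm ν (z * y) k = besselITerm ν z k * y ^ (2 * (k : ℝ) + ν) := by
  rw [besselITerm, besselITerm, mul_div_right_comm, mul_rpow (by positivity) hy, div_mul_eq_mul_div]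

theorem besselITerm_nonneg {ν z : ℝ} (hν : -1 < ν) (hz : 0 ≤ z) (k : ℕ) : 0 ≤ besselITerm ν z k :=
  div_nonneg (rpow_nonneg (by positivity) _) (mul_nonneg (by positivity)
    (Gamma_natCast_add_add_one_pos hν k).le)

theorem besselI_eq_rpow_mul_tsum (ν : ℝ) {z : ℝ} (hz : 0 < z) :
    besselI ν z = (z / 2) ^ ν * ∑' k : ℕ, ((z / 2) ^ 2) ^ k / (k ! * Gamma (k + ν + 1)) := by
  rw [besselI_eq_tsum]
  simp_rw [besselITerm_eq hz]
  exact tsum_mul_left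

theorem hasSum_besselITerm {ν z : ℝ} (hν : -1 < ν) (hz : 0 < z) :
    HasSum (besselITerm ν z) (besselI ν z) :=
  ((summable_pow_div_factorial_mul_Gamma hν _).mul_left _).congr
    (fun k => (besselITerm_eq hz k).symm) |>.hasSum

theorem hasSum_besselITerm_mul_besselITerm {ν z w : ℝ} (hν : -1 < ν) (hz : 0 < z) (hw : 0 < w) :
    HasSum (fun q : ℕ × ℕ => besselITerm ν z q.1 * besselITerm ν w q.2)
      (besselI ν z * besselI ν w) :=
  (hasSum_besselITerm hν hz).mul (hasSum_besselITerm hν hw)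
    ((hasSum_besselITerm hν hz).summable.mul_of_nonneg (hasSum_besselITerm hν hw).summable
      (besselITerm_nonneg hν hz.le) (besselITerm_nonneg hν hw.le))

theorem integral_rpow_two_mul_add_one_mul_exp_neg_mul_sq {c s : ℝ} (hc : 0 < c) (hs : -1 < s) :
    ∫ y in Set.Ioi 0, y ^ (2 * s + 1) * exp (-c * y ^ 2) = Gamma (s + 1) / (2 * c ^ (s + 1)) := by
  have h := integral_rpow_mul_exp_neg_mul_rpow two_pos (by linarith : -1 < 2 * s + 1) hc
  simp_rw [rpow_two] at h
  rw [h, show -(2 * s + 1 + 1) / 2 = -(s + 1) by ring, show (2 * s + 1 + 1) / 2 = s + 1 by ring,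
    rpow_neg hc.le]
  field_simp

theorem hasSum_besselITerm_mul_besselITerm_mul_Gamma_div {a c α β : ℝ} (ha : -1 < a) (hc : 0 < c)
    (hα : 0 < α) (hβ : 0 < β) :
    HasSum (fun q : ℕ × ℕ => besselITerm a α q.1 * besselITerm a β q.2 *
        (Gamma (q.1 + q.2 + a + 1) / (2 * c ^ ((q.1 : ℝ) + q.2 + a + 1))))
      (exp ((α ^ 2 + β ^ 2) / (4 * c)) * besselI a (α * β / (2 * c)) / (2 * c)) := by
  have h := (hasSum_pow_mul_pow_mul_Gamma_div ha (X := (α / 2) ^ 2 / c) (Y := (β / 2) ^ 2 / c)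
    (by positivity) (by positivity)).mul_left ((α * β / (4 * c)) ^ a / (2 * c))
  have hval : exp ((α ^ 2 + β ^ 2) / (4 * c)) * besselI a (α * β / (2 * c)) / (2 * c) =
      (α * β / (4 * c)) ^ a / (2 * c) *
        ((∑' i : ℕ, ((α / 2) ^ 2 / c * ((β / 2) ^ 2 / c)) ^ i / (i ! * Gamma (i + a + 1))) *
          (exp ((α / 2) ^ 2 / c) * exp ((β / 2) ^ 2 / c))) := by
    rw [besselI_eq_rpow_mul_tsum a (by positivity), ← exp_add,
      show α * β / (2 * c) / 2 = α * β / (4 * c) by ring,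
      show (α * β / (4 * c)) ^ 2 = (α / 2) ^ 2 / c * ((β / 2) ^ 2 / c) by field_simp; ring,
      show (α / 2) ^ 2 / c + (β / 2) ^ 2 / c = (α ^ 2 + β ^ 2) / (4 * c) by field_simp; ring]
    ring
  rw [hval]
  refine h.congr_fun fun ⟨k, m⟩ => ?_
  have hcpow : c ^ ((k : ℝ) + m + a + 1) = c ^ a * c * c ^ k * c ^ m := by
    rw [show (k : ℝ) + m + a + 1 = a + 1 + k + m by ring, rpow_add hc, rpow_add hc,
      rpow_add_one hc.ne', rpow_natCast, rpow_natCast]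
  have hK : (α * β / (4 * c)) ^ a = (α / 2) ^ a * (β / 2) ^ a / c ^ a := by
    rw [← mul_rpow (by positivity) (by positivity), ← div_rpow (by positivity) hc.le]
    ring_nf
  have := Gamma_natCast_add_add_one_pos ha k
  have := Gamma_natCast_add_add_one_pos ha m
  have := rpow_pos_of_pos hc a
  simp only [besselITerm_eq hα, besselITerm_eq hβ, hcpow, hK, div_pow]
  field_simp

theorem integral_mul_exp_neg_mul_sq_mul_besselI_mul_besselI {a c α β : ℝ} (ha : -1 < a)
    (hc : 0 < c) (hα : 0 < α) (hβ : 0 < β) :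
    ∫ y in Set.Ioi 0, y * exp (-c * y ^ 2) * besselI a (α * y) * besselI a (β * y) =
      exp ((α ^ 2 + β ^ 2) / (4 * c)) * besselI a (α * β / (2 * c)) / (2 * c) := by
  set F : ℕ × ℕ → ℝ → ℝ := fun q y => besselITerm a α q.1 * besselITerm a β q.2 *
    (y ^ (2 * ((q.1 : ℝ) + q.2 + a) + 1) * exp (-c * y ^ 2))
  have hs : ∀ q : ℕ × ℕ, -1 < (q.1 : ℝ) + q.2 + a := fun q => by
    linarith [(q.1.cast_nonneg : (0 : ℝ) ≤ q.1), (q.2.cast_nonneg : (0 : ℝ) ≤ q.2)]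
  have hF : ∀ y ∈ Set.Ioi (0 : ℝ),
      y * exp (-c * y ^ 2) * besselI a (α * y) * besselI a (β * y) = ∑' q, F q y := by
    intro y (hy : 0 < y)
    rw [mul_assoc, ← (hasSum_besselITerm_mul_besselITerm ha (mul_pos hα hy)
      (mul_pos hβ hy)).tsum_eq, ← tsum_mul_left]
    refine tsum_congr fun ⟨k, m⟩ => ?_
    dsimp only [F]
    rw [besselITerm_mul hα.le hy.le, besselITerm_mul hβ.le hy.le, show 2 * ((k : ℝ) + m + a) + 1 =
      (2 * k + a) + (2 * m + a) + 1 by ring, rpow_add_one hy.ne', rpow_add hy (2 * k + a)]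
    ring
  have hint : ∀ q, Integrable (F q) (volume.restrict (Set.Ioi 0)) := fun q =>
    (integrable_rpow_mul_exp_neg_mul_sq hc (by linarith [hs q])).integrableOn.const_mul _
  have hmoment : ∀ q : ℕ × ℕ, ∫ y in Set.Ioi 0, F q y = besselITerm a α q.1 * besselITerm a β q.2 *
      (Gamma (q.1 + q.2 + a + 1) / (2 * c ^ ((q.1 : ℝ) + q.2 + a + 1))) := fun q => by
    rw [integral_const_mul, integral_rpow_two_mul_add_one_mul_exp_neg_mul_sq hc (hs q)]
  have hnorm : ∀ q, ∫ y in Set.Ioi 0, ‖F q y‖ = ∫ y in Set.Ioi 0, F q y := fun q =>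
    setIntegral_congr_fun measurableSet_Ioi fun y (hy : 0 < y) => norm_of_nonneg <|
      mul_nonneg (mul_nonneg (besselITerm_nonneg ha hα.le _) (besselITerm_nonneg ha hβ.le _))
        (mul_nonneg (rpow_nonneg hy.le _) (exp_pos _).le)
  have hsum := hasSum_besselITerm_mul_besselITerm_mul_Gamma_div ha hc hα hβ
  rw [setIntegral_congr_fun measurableSet_Ioi hF, ← integral_tsum_of_summable_integral_norm hint
    (hsum.summable.congr fun q => ((hnorm q).trans (hmoment q)).symm), tsum_congr hmoment,
    hsum.tsum_eq]

/-- The generalized Laplace transform identity (3.24) for the transition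
density (3.25) of the Bessel process with drift of Pitman and Yor. -/
theorem stmt_9 (a b t x lam : ℝ) (ha : -1 < a) (hb : 0 < b)
    (ht : 0 < t) (hx : 0 < x) (hlam : 0 ≤ lam)
    (p : ℝ → ℝ)
    (hp : ∀ y, p y = (y * besselI a (b * y) / (t * besselI a (b * x)))
        * Real.exp (-(x ^ 2 + y ^ 2) / (2 * t) - b ^ 2 * t / 2)
        * besselI a (x * y / t)) :
    (∫ y in Set.Ioi (0 : ℝ), Real.exp (-lam * y ^ 2) * p y)
      = (besselI a (b * x / (1 + 2 * lam * t)) / ((1 + 2 * lam * t) * besselI a (b * x)))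
        * Real.exp (-lam * (x ^ 2 + b ^ 2 * t ^ 2) / (1 + 2 * lam * t)) := by
  have hc : 0 < lam + 1 / (2 * t) := by positivity
  have h2c : 2 * (lam + 1 / (2 * t)) = (1 + 2 * lam * t) / t := by field_simp; ring
  have hintegrand : ∀ y, exp (-lam * y ^ 2) * p y =
      exp (-x ^ 2 / (2 * t) - b ^ 2 * t / 2) / (t * besselI a (b * x)) *
        (y * exp (-(lam + 1 / (2 * t)) * y ^ 2) * besselI a (b * y) * besselI a (x / t * y)) := by
    intro y
    have hexp : exp (-lam * y ^ 2) * exp (-(x ^ 2 + y ^ 2) / (2 * t) - b ^ 2 * t / 2) =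
        exp (-x ^ 2 / (2 * t) - b ^ 2 * t / 2) * exp (-(lam + 1 / (2 * t)) * y ^ 2) := by
      rw [← exp_add, ← exp_add]
      congr 1
      field_simp
      ring
    rw [hp, show x * y / t = x / t * y by ring]
    calc _ = exp (-lam * y ^ 2) * exp (-(x ^ 2 + y ^ 2) / (2 * t) - b ^ 2 * t / 2) *
          (y * besselI a (b * y) / (t * besselI a (b * x)) * besselI a (x / t * y)) := by ring
      _ = _ := by rw [hexp]; ring
  simp_rw [hintegrand]
  rw [integral_const_mul, integral_mul_exp_neg_mul_sq_mul_besselI_mul_besselI ha hc hb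
    (by positivity), show b * (x / t) / (2 * (lam + 1 / (2 * t))) = b * x / (1 + 2 * lam * t) by
    rw [h2c]; field_simp, h2c, div_div_eq_mul_div, div_mul_eq_div_div,
    show -lam * (x ^ 2 + b ^ 2 * t ^ 2) / (1 + 2 * lam * t) =
    (-x ^ 2 / (2 * t) - b ^ 2 * t / 2) + (b ^ 2 + (x / t) ^ 2) / (4 * (lam + 1 / (2 * t))) by
    field_simp; ring, exp_add]
  field_simp
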